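/- Let N, k ≥ 1 be integers, let (x_i^{(r)})_{1≤i≤N, 1≤r≤k} be real numbers, and for each 1 ≤ r ≤ k let f^{(r)} : [0,N] → ℝ be a continuous function with f^{(r)}(0) = 0. Set S_m^{(r)} = Σ_{i=1}^m x_i^{(r)} with S_{−1}^{(r)} = S_0^{(r)} = 0, let U(N,k) = { u = (u_0,…,u_k) ∈ ℝ₊^{k+1} : 0 = u_0 ≤ u_1 ≤ … ≤ u_k = N }, G = sup_{u ∈ U(N,k)} Σ_{r=1}^k ( S_{⌊u_r⌋}^{(r)} − S_{⌊u_{r−1}⌋−1}^{(r)} ), and L = sup_{u ∈ U(N,k)} Σ_{r=1}^k ( f^{(r)}(u_r) − f^{(r)}(u_{r−1}) ). Then |G − L| ≤ 2·Σ_{r=1}^k max_{1≤i≤N} |S_i^{(r)} − f^{(r)}(i)| + 2·Σ_{r=1}^k sup{ |f^{(r)}(s) − f^{(r)}(t)| : 0 ≤ s,t ≤ N, |s−t| < 2 }. -/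

import Mathlib

/-!
Along every path `u ∈ U(N,k)` the discrete and the continuous increments differ, level by level,
by at most `2 (e_r + ω_r)`: an endpoint `S_m` with `m ∈ {⌊u⌋, ⌊u⌋ - 1}` is within `e_r` of
`f^{(r)}(max m 0)` (using `S_m = 0 = f^{(r)}(0)` for `m ≤ 0`), and that point lies in `[0, N]` at
distance less than `2` from `u`. A uniform bound on the two functionals along each path passes
to their suprema.
-/

open MeasureTheory Set

noncomputable section

/-- The partial sums `S_m^{(r)} = Σ_{i=1}^m x_i^{(r)}`, indexed by `m : ℤ`, with the
convention `S_{−1}^{(r)} = S_0^{(r)} = 0` (the sum is empty for `m ≤ 0`). -/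
def partialSumZ (x : ℕ → ℕ → ℝ) (r : ℕ) (m : ℤ) : ℝ :=
  ∑ i ∈ Finset.Icc 1 m.toNat, x i r

/-- `u ∈ U(N,k)`, i.e. `u = (u_0, …, u_k) ∈ ℝ₊^{k+1}` with
`0 = u_0 ≤ u_1 ≤ … ≤ u_k = N`. -/
def memU (N k : ℕ) (u : ℕ → ℝ) : Prop :=
  u 0 = 0 ∧ u k = (N : ℝ) ∧ (∀ i, i < k → u i ≤ u (i + 1)) ∧ ∀ i, i ≤ k → 0 ≤ u i

theorem abs_sSup_sub_sSup_le {α : Type*} {P : α → Prop} {F G : α → ℝ} {D : ℝ} (hD : 0 ≤ D)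
    (hG : BddAbove {v | ∃ a, P a ∧ v = G a}) (hFG : ∀ a, P a → |F a - G a| ≤ D) :
    |sSup {v | ∃ a, P a ∧ v = F a} - sSup {v | ∃ a, P a ∧ v = G a}| ≤ D := by
  by_cases hP : ∃ a, P a
  · obtain ⟨a₀, ha₀⟩ := hP
    have hG_le : ∀ a, P a → G a ≤ sSup {v | ∃ a, P a ∧ v = G a} :=
      fun a ha => le_csSup hG ⟨a, ha, rfl⟩
    have hF : BddAbove {v | ∃ a, P a ∧ v = F a} := by
      refine ⟨sSup {v | ∃ a, P a ∧ v = G a} + D, ?_⟩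
      rintro _ ⟨a, ha, rfl⟩
      linarith [(abs_le.mp (hFG a ha)).2, hG_le a ha]
    rw [abs_sub_le_iff, sub_le_iff_le_add, sub_le_iff_le_add]
    constructor
    · refine csSup_le ⟨_, a₀, ha₀, rfl⟩ ?_
      rintro _ ⟨a, ha, rfl⟩
      linarith [(abs_le.mp (hFG a ha)).2, hG_le a ha]
    · refine csSup_le ⟨_, a₀, ha₀, rfl⟩ ?_
      rintro _ ⟨a, ha, rfl⟩
      linarith [(abs_le.mp (hFG a ha)).1, le_csSup hF ⟨a, ha, rfl⟩]
  · push Not at hP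
    simp [hP, hD]

theorem abs_sub_le_sSup_of_continuousOn {f : ℝ → ℝ} {K : Set ℝ} (hK : IsCompact K)
    (hf : ContinuousOn f K) {δ s t : ℝ} (hs : s ∈ K) (ht : t ∈ K) (hst : |s - t| < δ) :
    |f s - f t| ≤ sSup {v | ∃ s t : ℝ, s ∈ K ∧ t ∈ K ∧ |s - t| < δ ∧ v = |f s - f t|} := by
  have hcont : ContinuousOn (fun p : ℝ × ℝ => |f p.1 - f p.2|) (K ×ˢ K) :=
    ((hf.comp continuousOn_fst fun _ hp => hp.1).sub
      (hf.comp continuousOn_snd fun _ hp => hp.2)).abs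
  refine le_csSup (((hK.prod hK).image_of_continuousOn hcont).bddAbove.mono ?_)
    ⟨s, t, hs, ht, hst, rfl⟩
  rintro _ ⟨s, t, hs, ht, -, rfl⟩
  exact ⟨(s, t), ⟨hs, ht⟩, rfl⟩

theorem memU.mem_Icc {N k : ℕ} {u : ℕ → ℝ} (hu : memU N k u) {j : ℕ} (hj : j ≤ k) :
    u j ∈ Icc 0 (N : ℝ) := by
  obtain ⟨-, hk, hstep, hnonneg⟩ := hu
  have hmono : MonotoneOn u (Iic k) :=
    monotoneOn_of_le_succ ordConnected_Iic fun a _ _ ha => hstep a (Nat.succ_le_iff.mp ha)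
  exact ⟨hnonneg j hj, hk ▸ hmono hj self_mem_Iic hj⟩

theorem bddAbove_lastPassage {N k : ℕ} {f : ℕ → ℝ → ℝ}
    (hfc : ∀ r, ContinuousOn (f r) (Icc 0 (N : ℝ))) :
    BddAbove {v | ∃ u : ℕ → ℝ, memU N k u ∧ v = ∑ r ∈ Finset.Icc 1 k,
      (f r (u r) - f r (u (r - 1)))} := by
  choose M hM using fun r => isCompact_Icc.exists_bound_of_continuousOn (hfc r)
  refine ⟨∑ r ∈ Finset.Icc 1 k, 2 * M r, ?_⟩
  rintro _ ⟨u, hu, rfl⟩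
  refine Finset.sum_le_sum fun r hr => ?_
  have hr := Finset.mem_Icc.mp hr
  have h₁ := hM r _ (hu.mem_Icc hr.2)
  have h₂ := hM r _ (hu.mem_Icc (j := r - 1) (by omega))
  rw [Real.norm_eq_abs] at h₁ h₂
  linarith [le_abs_self (f r (u r)), neg_abs_le (f r (u (r - 1)))]

section Endpoints

variable {N : ℕ} {x : ℕ → ℕ → ℝ} {r : ℕ} {f : ℝ → ℝ} {e ω : ℝ}

theorem abs_partialSumZ_sub_toNat_le (hf0 : f 0 = 0) (he : 0 ≤ e)
    (hS : ∀ i ∈ Finset.Icc 1 N, |partialSumZ x r i - f i| ≤ e) {m : ℤ} (hm : m.toNat ≤ N) :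
    |partialSumZ x r m - f m.toNat| ≤ e := by
  rcases Nat.eq_zero_or_pos m.toNat with h | h
  · simp [partialSumZ, h, hf0, he]
  · simpa only [partialSumZ, Int.toNat_natCast] using hS m.toNat (Finset.mem_Icc.mpr ⟨h, hm⟩)

theorem abs_partialSumZ_sub_le (hf0 : f 0 = 0) (he : 0 ≤ e)
    (hS : ∀ i ∈ Finset.Icc 1 N, |partialSumZ x r i - f i| ≤ e)
    (hω : ∀ s ∈ Icc 0 (N : ℝ), ∀ t ∈ Icc 0 (N : ℝ), |s - t| < 2 → |f s - f t| ≤ ω)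
    {m : ℤ} {u : ℝ} (hu : u ∈ Icc 0 (N : ℝ)) (hmu : m ≤ u) (hum : u < m + 2) :
    |partialSumZ x r m - f u| ≤ e + ω := by
  have hcast : (m.toNat : ℝ) = max (m : ℝ) 0 := by exact_mod_cast Int.toNat_eq_max m
  have hle : (m.toNat : ℝ) ≤ u := hcast ▸ max_le hmu hu.1
  have hmN : m.toNat ≤ N := by exact_mod_cast hle.trans hu.2
  have hclose : |(m.toNat : ℝ) - u| < 2 := by
    rw [abs_sub_comm, abs_of_nonneg (sub_nonneg.mpr hle)]
    linarith [le_max_left (m : ℝ) 0]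
  calc |partialSumZ x r m - f u|
      ≤ |partialSumZ x r m - f m.toNat| + |f m.toNat - f u| := abs_sub_le _ _ _
    _ ≤ e + ω := add_le_add (abs_partialSumZ_sub_toNat_le hf0 he hS hmN)
        (hω _ ⟨Nat.cast_nonneg _, hle.trans hu.2⟩ _ hu hclose)

theorem abs_partialSumZ_increment_sub_le (hf0 : f 0 = 0) (he : 0 ≤ e)
    (hS : ∀ i ∈ Finset.Icc 1 N, |partialSumZ x r i - f i| ≤ e)
    (hω : ∀ s ∈ Icc 0 (N : ℝ), ∀ t ∈ Icc 0 (N : ℝ), |s - t| < 2 → |f s - f t| ≤ ω)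
    {a b : ℝ} (ha : a ∈ Icc 0 (N : ℝ)) (hb : b ∈ Icc 0 (N : ℝ)) :
    |(partialSumZ x r ⌊b⌋ - partialSumZ x r (⌊a⌋ - 1)) - (f b - f a)| ≤ 2 * e + 2 * ω := by
  have hb' := abs_partialSumZ_sub_le hf0 he hS hω hb (Int.floor_le b)
    (by linarith [Int.lt_floor_add_one b])
  have ha' := abs_partialSumZ_sub_le hf0 he hS hω ha (m := ⌊a⌋ - 1)
    (by push_cast; linarith [Int.floor_le a]) (by push_cast; linarith [Int.lt_floor_add_one a])
  calc |(partialSumZ x r ⌊b⌋ - partialSumZ x r (⌊a⌋ - 1)) - (f b - f a)|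
      = |(partialSumZ x r ⌊b⌋ - f b) - (partialSumZ x r (⌊a⌋ - 1) - f a)| := by ring_nf
    _ ≤ |partialSumZ x r ⌊b⌋ - f b| + |partialSumZ x r (⌊a⌋ - 1) - f a| := abs_sub _ _
    _ ≤ 2 * e + 2 * ω := by linarith

end Endpoints

theorem discrete_continuous_comparison_general (N k : ℕ) (hN : 1 ≤ N)
    (x : ℕ → ℕ → ℝ) (f : ℕ → ℝ → ℝ)
    (hfc : ∀ r, ContinuousOn (f r) (Set.Icc 0 (N : ℝ)))
    (hf0 : ∀ r, f r 0 = 0) :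
    |sSup {v | ∃ u : ℕ → ℝ, memU N k u ∧ v = ∑ r ∈ Finset.Icc 1 k,
          (partialSumZ x r ⌊u r⌋ - partialSumZ x r (⌊u (r - 1)⌋ - 1))} -
      sSup {v | ∃ u : ℕ → ℝ, memU N k u ∧ v = ∑ r ∈ Finset.Icc 1 k,
          (f r (u r) - f r (u (r - 1)))}| ≤
      2 * ∑ r ∈ Finset.Icc 1 k, (Finset.Icc 1 N).sup' (Finset.nonempty_Icc.mpr hN)
            (fun i => |partialSumZ x r (i : ℤ) - f r (i : ℝ)|) +
      2 * ∑ r ∈ Finset.Icc 1 k, sSup {v | ∃ s t : ℝ, s ∈ Set.Icc (0 : ℝ) (N : ℝ) ∧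
            t ∈ Set.Icc (0 : ℝ) (N : ℝ) ∧ |s - t| < 2 ∧ v = |f r s - f r t|} := by
  set e : ℕ → ℝ := fun r => (Finset.Icc 1 N).sup' (Finset.nonempty_Icc.mpr hN)
    (fun i => |partialSumZ x r (i : ℤ) - f r (i : ℝ)|)
  set ω : ℕ → ℝ := fun r => sSup {v | ∃ s t : ℝ, s ∈ Set.Icc (0 : ℝ) (N : ℝ) ∧
    t ∈ Set.Icc (0 : ℝ) (N : ℝ) ∧ |s - t| < 2 ∧ v = |f r s - f r t|}
  have hS : ∀ r, ∀ i ∈ Finset.Icc 1 N, |partialSumZ x r i - f r i| ≤ e r :=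
    fun r i hi => Finset.le_sup' (fun i : ℕ => |partialSumZ x r i - f r i|) hi
  have hω : ∀ r, ∀ s ∈ Icc 0 (N : ℝ), ∀ t ∈ Icc 0 (N : ℝ), |s - t| < 2 → |f r s - f r t| ≤ ω r :=
    fun r s hs t ht hst => abs_sub_le_sSup_of_continuousOn isCompact_Icc (hfc r) hs ht hst
  have he : ∀ r, 0 ≤ e r := fun r => (abs_nonneg _).trans (hS r 1 (by simp [hN]))
  have h0 : (0 : ℝ) ∈ Icc 0 (N : ℝ) := ⟨le_rfl, Nat.cast_nonneg N⟩
  have hω0 : ∀ r, 0 ≤ ω r := fun r => (abs_nonneg _).trans (hω r 0 h0 0 h0 (by norm_num))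
  rw [Finset.mul_sum, Finset.mul_sum, ← Finset.sum_add_distrib]
  refine abs_sSup_sub_sSup_le
    (Finset.sum_nonneg fun r _ => by linarith [he r, hω0 r]) (bddAbove_lastPassage hfc)
    fun u hu => ?_
  rw [← Finset.sum_sub_distrib]
  refine (Finset.abs_sum_le_sum_abs _ _).trans (Finset.sum_le_sum fun r hr => ?_)
  have hr := Finset.mem_Icc.mp hr
  exact abs_partialSumZ_increment_sub_le (hf0 r) (he r) (hS r) (hω r)
    (hu.mem_Icc (j := r - 1) (by omega)) (hu.mem_Icc hr.2)

/-- **Deterministic comparison bound.** For real numbers `x_i^{(r)}` and continuous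
functions `f^{(r)} : [0,N] → ℝ` vanishing at `0`, the discrete last-passage functional
`G = sup_{u ∈ U(N,k)} Σ_{r=1}^k (S_{⌊u_r⌋}^{(r)} − S_{⌊u_{r−1}⌋−1}^{(r)})` and the
continuous one `L = sup_{u ∈ U(N,k)} Σ_{r=1}^k (f^{(r)}(u_r) − f^{(r)}(u_{r−1}))` satisfy
`|G − L| ≤ 2 Σ_r max_{1≤i≤N} |S_i^{(r)} − f^{(r)}(i)|
  + 2 Σ_r sup{|f^{(r)}(s) − f^{(r)}(t)| : 0 ≤ s,t ≤ N, |s−t| < 2}`. -/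
theorem discrete_continuous_comparison (N k : ℕ) (hN : 1 ≤ N) (hk : 1 ≤ k)
    (x : ℕ → ℕ → ℝ) (f : ℕ → ℝ → ℝ)
    (hfc : ∀ r, ContinuousOn (f r) (Set.Icc 0 (N : ℝ)))
    (hf0 : ∀ r, f r 0 = 0) :
    |sSup {v | ∃ u : ℕ → ℝ, memU N k u ∧ v = ∑ r ∈ Finset.Icc 1 k,
          (partialSumZ x r ⌊u r⌋ - partialSumZ x r (⌊u (r - 1)⌋ - 1))} -
      sSup {v | ∃ u : ℕ → ℝ, memU N k u ∧ v = ∑ r ∈ Finset.Icc 1 k,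
          (f r (u r) - f r (u (r - 1)))}| ≤
      2 * ∑ r ∈ Finset.Icc 1 k, (Finset.Icc 1 N).sup' (Finset.nonempty_Icc.mpr hN)
            (fun i => |partialSumZ x r (i : ℤ) - f r (i : ℝ)|) +
      2 * ∑ r ∈ Finset.Icc 1 k, sSup {v | ∃ s t : ℝ, s ∈ Set.Icc (0 : ℝ) (N : ℝ) ∧
            t ∈ Set.Icc (0 : ℝ) (N : ℝ) ∧ |s - t| < 2 ∧ v = |f r s - f r t|} :=
  discrete_continuous_comparison_general N k hN x f hfc hf0
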